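/- Let A and B be d×d positive semidefinite Hermitian matrices such that rank(A − B) ≤ r. Then ‖√A − √B‖_tr ≤ √(r·‖A − B‖_tr); in particular |Tr√A − Tr√B| ≤ √(r·‖A − B‖_tr). -/

import Mathlib

open scoped ComplexOrder Matrix BigOperators Kronecker
open MeasureTheory

noncomputable section

/-- The old Mathlib definition (Dec 2024) of the square root of a positive semidefinite matrix,
removed from current Mathlib; restored verbatim in meaning. -/
def Matrix.PosSemidef.sqrt {n 𝕜 : Type*} [Fintype n] [RCLike 𝕜] [DecidableEq n]
    {A : Matrix n n 𝕜} (hA : A.PosSemidef) : Matrix n n 𝕜 :=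
  (hA.1.eigenvectorUnitary : Matrix n n 𝕜) *
    Matrix.diagonal ((↑) ∘ (Real.sqrt ·) ∘ hA.1.eigenvalues) *
    (star hA.1.eigenvectorUnitary : Matrix n n 𝕜)

/-- Trace norm of a complex square matrix: `Tr √(XᴴX)`. -/
def traceNorm {ι : Type*} [Fintype ι] [DecidableEq ι] (X : Matrix ι ι ℂ) : ℝ :=
  ((Matrix.posSemidef_conjTranspose_mul_self X).sqrt.trace).re

/-- Frobenius norm `√(Tr(XᴴX))`. -/
def frobNorm {ι : Type*} [Fintype ι] [DecidableEq ι] (X : Matrix ι ι ℂ) : ℝ :=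
  Real.sqrt ((Xᴴ * X).trace).re

/-- Operator norm (largest singular value), realized as the norm of the induced
continuous linear map on Euclidean space. -/
def opNorm {ι : Type*} [Fintype ι] [DecidableEq ι] (X : Matrix ι ι ℂ) : ℝ :=
  ‖Matrix.toEuclideanCLM (𝕜 := ℂ) X‖

/-- Euclidean norm on `ℝ^m`. -/
def l2norm {m : ℕ} (z : Fin m → ℝ) : ℝ :=
  Real.sqrt (∑ i, (z i) ^ 2)

open Classical in
/-- The positive part `[H]₊` of a Hermitian matrix (junk value `0` otherwise). -/
def matPosPart {ι : Type*} [Fintype ι] [DecidableEq ι] (H : Matrix ι ι ℂ) :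
    Matrix ι ι ℂ :=
  if h : H.IsHermitian then
    (h.eigenvectorUnitary : Matrix ι ι ℂ) *
      Matrix.diagonal (fun i => ((max (h.eigenvalues i) 0 : ℝ) : ℂ)) *
      (star h.eigenvectorUnitary : Matrix ι ι ℂ)
  else 0

open Classical in
/-- The positive semidefinite square root of a positive semidefinite matrix
(junk value `0` otherwise). -/
def psdSqrt {ι : Type*} [Fintype ι] [DecidableEq ι] (A : Matrix ι ι ℂ) :
    Matrix ι ι ℂ :=
  if h : A.PosSemidef then h.sqrt else 0

/-!
Write `C = A - B = C⁺ - C⁻`. The matrix `M = B + C⁺ = A + C⁻` dominates `A` and `B`, so by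
operator monotonicity of `√` the positive matrix `√M - √B` dominates `√A - √B`. Pairing with the
spectral projection onto the positive part of `√A - √B` gives
`Tr (√A - √B)⁺ ≤ Tr √M - Tr √B ≤ Tr √C⁺`, the last step by subadditivity of `X ↦ Tr √X`;
exchanging `A` and `B` bounds the negative part by `Tr √C⁻`. Hence
`‖√A - √B‖_tr ≤ ∑ᵢ √|λᵢ(C)|`, and Cauchy–Schwarz over the at most `r` nonzero eigenvalues of `C`
bounds this by `√(r ‖C‖_tr)`.

Subadditivity: for invertible `W = X + Y`, `Tr √W = Tr (X W^{-1/2}) + Tr (Y W^{-1/2})`, and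
`W^{-1/2} ≤ X^{-1/2}` since `√` is operator monotone and inversion operator antitone, so the first
term is at most `Tr (X X^{-1/2}) = Tr √X`. The general case follows from `X + ε, Y + ε → X, Y`.
-/

open scoped MatrixOrder Matrix.Norms.L2Operator

lemma Real.sqrt_posPart_add_sqrt_negPart (x : ℝ) : √(x⁺) + √(x⁻) = √|x| := by
  rcases le_total 0 x with h | h
  · simp [posPart_eq_self.mpr h, negPart_eq_zero.mpr h, abs_of_nonneg h]
  · simp [posPart_eq_zero.mpr h, negPart_eq_neg.mpr h, abs_of_nonpos h]

lemma Real.sum_sqrt_le_sqrt_card_mul_sum {ι : Type*} (s : Finset ι) {f : ι → ℝ}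
    (hf : ∀ i ∈ s, 0 ≤ f i) : ∑ i ∈ s, √(f i) ≤ √(s.card * ∑ i ∈ s, f i) := by
  refine Real.le_sqrt_of_sq_le ?_
  calc (∑ i ∈ s, √(f i)) ^ 2 ≤ s.card * ∑ i ∈ s, √(f i) ^ 2 := sq_sum_le_card_mul_sum_sq
    _ = s.card * ∑ i ∈ s, f i := by
        rw [Finset.sum_congr rfl fun i hi => Real.sq_sqrt (hf i hi)]

lemma CFC.mul_ringInverse_sqrt {A : Type*} [CStarAlgebra A] [PartialOrder A]
    [StarOrderedRing A] {a : A} (ha : IsStrictlyPositive a) :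
    a * Ring.inverse (CFC.sqrt a) = CFC.sqrt a :=
  calc a * Ring.inverse (CFC.sqrt a)
      = CFC.sqrt a * CFC.sqrt a * Ring.inverse (CFC.sqrt a) := by rw [CFC.sqrt_mul_sqrt_self a]
    _ = CFC.sqrt a := by rw [mul_assoc, Ring.mul_inverse_cancel _ (ha.sqrt a).isUnit, mul_one]

namespace Matrix

section RCLike

variable {n 𝕜 : Type*} [Fintype n] [RCLike 𝕜]

lemma trace_mono {X Y : Matrix n n 𝕜} (h : X ≤ Y) : X.trace ≤ Y.trace :=
  sub_nonneg.mp (by simpa [trace_sub] using (le_iff.mp h).trace_nonneg)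

variable [DecidableEq n]

lemma PosSemidef.sqrt_eq_cfcSqrt {A : Matrix n n 𝕜} (hA : A.PosSemidef) :
    hA.sqrt = CFC.sqrt A := by
  rw [CFC.sqrt_eq_real_sqrt A hA.nonneg, cfcₙ_eq_cfc, hA.1.cfc_eq]
  rfl

lemma trace_mul_nonneg {X Y : Matrix n n 𝕜} (hX : 0 ≤ X) (hY : 0 ≤ Y) :
    0 ≤ (X * Y).trace :=
  calc (0 : 𝕜) ≤ (CFC.sqrt X * Y * CFC.sqrt X).trace := by
        simpa using trace_mono ((CFC.sqrt_nonneg X).isSelfAdjoint.conjugate_nonneg hY)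
    _ = (X * Y).trace := by rw [trace_mul_cycle, CFC.sqrt_mul_sqrt_self X]

lemma trace_mul_mono_right {X Y Z : Matrix n n 𝕜} (hX : 0 ≤ X) (h : Y ≤ Z) :
    (X * Y).trace ≤ (X * Z).trace :=
  sub_nonneg.mp (by simpa [mul_sub, trace_sub] using trace_mul_nonneg hX (sub_nonneg.mpr h))

lemma trace_mul_mono_left {X Y Z : Matrix n n 𝕜} (hX : 0 ≤ X) (h : Y ≤ Z) :
    (Y * X).trace ≤ (Z * X).trace := by
  simpa only [trace_mul_comm _ X] using trace_mul_mono_right hX h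

lemma trace_posPart_le {D N : Matrix n n 𝕜} (hD : IsSelfAdjoint D) (hN : 0 ≤ N) (hDN : D ≤ N) :
    (D⁺).trace ≤ N.trace := by
  have hcont (f : ℝ → ℝ) : ContinuousOn f (spectrum ℝ D) := D.finite_real_spectrum.continuousOn _
  set P := cfc (fun x : ℝ => if 0 < x then (1 : ℝ) else 0) D
  have hPD : P * D = D⁺ := by
    rw [CFC.posPart_def, cfcₙ_eq_cfc]
    conv_lhs => rw [← cfc_id' ℝ D, ← cfc_mul _ _ D (hcont _) (hcont _)]
    refine cfc_congr fun x _ => ?_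
    split_ifs with hx
    · simp [hx.le]
    · simp [posPart_eq_zero.mpr (not_lt.mp hx)]
  have hP0 : 0 ≤ P := cfc_nonneg fun x _ => by split_ifs <;> norm_num
  have hP1 : P ≤ 1 := cfc_le_one _ D fun x _ => by split_ifs <;> norm_num
  calc (D⁺).trace = (P * D).trace := by rw [hPD]
    _ ≤ (P * N).trace := trace_mul_mono_right hP0 hDN
    _ ≤ (1 * N).trace := trace_mul_mono_left hN hP1
    _ = N.trace := by rw [one_mul]

lemma IsHermitian.trace_cfc {A : Matrix n n 𝕜} (hA : A.IsHermitian) (f : ℝ → ℝ) :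
    (cfc f A).trace = ∑ i, (f (hA.eigenvalues i) : 𝕜) := by
  rw [hA.cfc_eq, IsHermitian.cfc, Unitary.conjStarAlgAut_apply, trace_mul_cycle,
    Unitary.coe_star_mul_self, one_mul, trace_diagonal]
  rfl

lemma IsHermitian.trace_sqrt_cfc {A : Matrix n n 𝕜} (hA : A.IsHermitian) {f : ℝ → ℝ}
    (hf : ∀ x, 0 ≤ f x) :
    (CFC.sqrt (cfc f A)).trace = ∑ i, (√(f (hA.eigenvalues i)) : 𝕜) := by
  rw [CFC.sqrt_eq_real_sqrt _ (cfc_nonneg fun x _ => hf x), cfcₙ_eq_cfc,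
    ← cfc_comp Real.sqrt f A hA.isSelfAdjoint Real.continuous_sqrt.continuousOn
      (A.finite_real_spectrum.continuousOn _)]
  exact hA.trace_cfc _

lemma IsHermitian.trace_sqrt_posPart_add_trace_sqrt_negPart {A : Matrix n n 𝕜}
    (hA : A.IsHermitian) :
    (CFC.sqrt A⁺).trace + (CFC.sqrt A⁻).trace = ∑ i, (√|hA.eigenvalues i| : 𝕜) := by
  rw [CFC.posPart_def, CFC.negPart_def, cfcₙ_eq_cfc, cfcₙ_eq_cfc, hA.trace_sqrt_cfc posPart_nonneg,
    hA.trace_sqrt_cfc negPart_nonneg, ← Finset.sum_add_distrib]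
  simp only [← RCLike.ofReal_add, Real.sqrt_posPart_add_sqrt_negPart]

end RCLike

variable {n : Type*} [Fintype n] [DecidableEq n]

lemma trace_mul_ringInverse_sqrt_le {X W : Matrix n n ℂ} (hX : IsStrictlyPositive X)
    (hXW : X ≤ W) : (X * Ring.inverse (CFC.sqrt W)).trace ≤ (CFC.sqrt X).trace := by
  have hinv : Ring.inverse (CFC.sqrt W) ≤ Ring.inverse (CFC.sqrt X) :=
    CStarAlgebra.ringInverse_le_ringInverse (CFC.sqrt_le_sqrt _ _ hXW) (hX.sqrt X)
  calc (X * Ring.inverse (CFC.sqrt W)).trace ≤ (X * Ring.inverse (CFC.sqrt X)).trace :=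
        trace_mul_mono_right hX.nonneg hinv
    _ = (CFC.sqrt X).trace := by rw [CFC.mul_ringInverse_sqrt hX]

lemma trace_sqrt_add_le_of_isStrictlyPositive {X Y : Matrix n n ℂ} (hX : IsStrictlyPositive X)
    (hY : IsStrictlyPositive Y) :
    (CFC.sqrt (X + Y)).trace ≤ (CFC.sqrt X).trace + (CFC.sqrt Y).trace :=
  calc (CFC.sqrt (X + Y)).trace
      = (X * Ring.inverse (CFC.sqrt (X + Y))).trace
        + (Y * Ring.inverse (CFC.sqrt (X + Y))).trace := by
        rw [← trace_add, ← add_mul, CFC.mul_ringInverse_sqrt (hX.add_nonneg hY.nonneg)]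
    _ ≤ (CFC.sqrt X).trace + (CFC.sqrt Y).trace :=
        add_le_add (trace_mul_ringInverse_sqrt_le hX (le_add_of_nonneg_right hY.nonneg))
          (trace_mul_ringInverse_sqrt_le hY (le_add_of_nonneg_left hX.nonneg))

lemma trace_sqrt_add_le {X Y : Matrix n n ℂ} (hX : 0 ≤ X) (hY : 0 ≤ Y) :
    (CFC.sqrt (X + Y)).trace ≤ (CFC.sqrt X).trace + (CFC.sqrt Y).trace := by
  let shift (Z : Matrix n n ℂ) (ε : ℝ) : Matrix n n ℂ := Z + algebraMap ℝ _ ε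
  let g (ε : ℝ) : ℂ := (CFC.sqrt (shift X ε)).trace + (CFC.sqrt (shift Y ε)).trace
  have hcont : ContinuousOn g (Set.Ici 0) := by
    have hsqrt {Z : Matrix n n ℂ} (hZ : 0 ≤ Z) :
        ContinuousOn (fun ε => (CFC.sqrt (shift Z ε)).trace) (Set.Ici 0) :=
      continuous_id.matrix_trace.comp_continuousOn <| CFC.continuousOn_sqrt.comp
        (by fun_prop) fun ε hε => add_nonneg hZ (algebraMap_nonneg _ hε)
    exact (hsqrt hX).add (hsqrt hY)
  have hbound (ε : ℝ) (hε : 0 < ε) : (CFC.sqrt (X + Y)).trace ≤ g ε := by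
    refine (trace_mono (CFC.sqrt_le_sqrt _ _ ?_)).trans
      (trace_sqrt_add_le_of_isStrictlyPositive
        (IsStrictlyPositive.nonneg_add hX (isStrictlyPositive_algebraMap hε))
        (IsStrictlyPositive.nonneg_add hY (isStrictlyPositive_algebraMap hε)))
    have hc := algebraMap_nonneg (Matrix n n ℂ) hε.le
    calc X + Y ≤ X + Y + (algebraMap ℝ _ ε + algebraMap ℝ _ ε) :=
          le_add_of_nonneg_right (add_nonneg hc hc)
      _ = shift X ε + shift Y ε := by simp only [shift]; abel
  have hlim : Filter.Tendsto g (nhdsWithin 0 (Set.Ioi 0)) (nhds (g 0)) :=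
    ((hcont 0 Set.self_mem_Ici).mono Set.Ioi_subset_Ici_self).tendsto
  simpa [g, shift] using ge_of_tendsto hlim (eventually_nhdsWithin_of_forall hbound)

lemma trace_posPart_sqrt_sub_sqrt_le {A B : Matrix n n ℂ} (hA : 0 ≤ A) (hB : 0 ≤ B) :
    ((CFC.sqrt A - CFC.sqrt B)⁺).trace ≤ (CFC.sqrt ((A - B)⁺)).trace := by
  have hAM : A ≤ B + (A - B)⁺ :=
    sub_le_iff_le_add'.mp (CFC.le_posPart (hA.isSelfAdjoint.sub hB.isSelfAdjoint))
  have hBM : B ≤ B + (A - B)⁺ := le_add_of_nonneg_right (CFC.posPart_nonneg _)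
  calc ((CFC.sqrt A - CFC.sqrt B)⁺).trace
      ≤ (CFC.sqrt (B + (A - B)⁺) - CFC.sqrt B).trace :=
        trace_posPart_le ((CFC.sqrt_nonneg A).isSelfAdjoint.sub (CFC.sqrt_nonneg B).isSelfAdjoint)
          (sub_nonneg.mpr (CFC.sqrt_le_sqrt _ _ hBM))
          (sub_le_sub_right (CFC.sqrt_le_sqrt _ _ hAM) _)
    _ ≤ (CFC.sqrt ((A - B)⁺)).trace := by
        rw [trace_sub, sub_le_iff_le_add']
        exact trace_sqrt_add_le hB (CFC.posPart_nonneg _)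

end Matrix

section TraceNorm

variable {n : Type*} [Fintype n] [DecidableEq n]

lemma psdSqrt_eq_cfcSqrt (A : Matrix n n ℂ) : psdSqrt A = CFC.sqrt A := by
  unfold psdSqrt
  split_ifs with hA
  · exact hA.sqrt_eq_cfcSqrt
  · rw [CFC.sqrt_of_not_nonneg (by rwa [Matrix.nonneg_iff_posSemidef])]

lemma traceNorm_eq_re_trace_abs (X : Matrix n n ℂ) : traceNorm X = (CFC.abs X).trace.re := by
  rw [traceNorm, Matrix.PosSemidef.sqrt_eq_cfcSqrt]
  rfl

lemma traceNorm_sqrt_sub_sqrt_le {A B : Matrix n n ℂ} (hA : 0 ≤ A) (hB : 0 ≤ B) :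
    traceNorm (CFC.sqrt A - CFC.sqrt B)
      ≤ (CFC.sqrt ((A - B)⁺)).trace.re + (CFC.sqrt ((A - B)⁻)).trace.re := by
  have hD : IsSelfAdjoint (CFC.sqrt A - CFC.sqrt B) :=
    (CFC.sqrt_nonneg A).isSelfAdjoint.sub (CFC.sqrt_nonneg B).isSelfAdjoint
  rw [traceNorm_eq_re_trace_abs, ← CFC.posPart_add_negPart _ hD, Matrix.trace_add, Complex.add_re,
    ← CFC.posPart_neg, ← CFC.posPart_neg (A - B), neg_sub, neg_sub]
  exact add_le_add (Complex.re_le_re (Matrix.trace_posPart_sqrt_sub_sqrt_le hA hB))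
    (Complex.re_le_re (Matrix.trace_posPart_sqrt_sub_sqrt_le hB hA))

lemma Matrix.IsHermitian.traceNorm_eq_sum_abs_eigenvalues {C : Matrix n n ℂ}
    (hC : C.IsHermitian) : traceNorm C = ∑ i, |hC.eigenvalues i| := by
  rw [traceNorm_eq_re_trace_abs, CFC.abs_eq_cfc_norm C hC, hC.trace_cfc, Complex.re_sum]
  simp

lemma Matrix.IsHermitian.abs_re_trace_le_traceNorm {C : Matrix n n ℂ} (hC : C.IsHermitian) :
    |C.trace.re| ≤ traceNorm C := by
  rw [hC.trace_eq_sum_eigenvalues, Complex.re_sum, hC.traceNorm_eq_sum_abs_eigenvalues]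
  simpa using Finset.abs_sum_le_sum_abs _ _

lemma Matrix.IsHermitian.sum_sqrt_abs_eigenvalues_le {C : Matrix n n ℂ} (hC : C.IsHermitian)
    {r : ℕ} (hr : C.rank ≤ r) : ∑ i, √|hC.eigenvalues i| ≤ √(r * traceNorm C) := by
  set s := Finset.univ.filter fun i => hC.eigenvalues i ≠ 0
  have hs : (s.card : ℝ) ≤ r := by
    rw [← Fintype.card_subtype, ← hC.rank_eq_card_non_zero_eigs]
    exact_mod_cast hr
  have hsum (g : ℝ → ℝ) (hg : g 0 = 0) :
      ∑ i ∈ s, g (hC.eigenvalues i) = ∑ i, g (hC.eigenvalues i) :=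
    Finset.sum_filter_of_ne fun i _ hi h0 => hi (by rw [h0, hg])
  calc ∑ i, √|hC.eigenvalues i| = ∑ i ∈ s, √|hC.eigenvalues i| :=
        (hsum (fun x => √|x|) (by simp)).symm
    _ ≤ √(s.card * ∑ i ∈ s, |hC.eigenvalues i|) :=
        Real.sum_sqrt_le_sqrt_card_mul_sum s fun i _ => abs_nonneg _
    _ ≤ √(r * traceNorm C) := by
        rw [hsum _ abs_zero, hC.traceNorm_eq_sum_abs_eigenvalues]
        gcongr

end TraceNorm

/-- **Square-root perturbation bound in trace norm** (from the proof of the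
fidelity-certification theorem of "Quantum Tomography via Compressed Sensing").

For positive semidefinite `A, B` with `rank(A - B) ≤ r`:
`‖√A - √B‖_tr ≤ √(r ‖A - B‖_tr)`, and in particular
`|Tr √A - Tr √B| ≤ √(r ‖A - B‖_tr)`. -/
theorem sqrt_perturbation_trace_norm_bound
    {ι : Type*} [Fintype ι] [DecidableEq ι] (r : ℕ)
    (A B : Matrix ι ι ℂ) (hA : A.PosSemidef) (hB : B.PosSemidef)
    (hrank : (A - B).rank ≤ r) :
    traceNorm (psdSqrt A - psdSqrt B) ≤ Real.sqrt ((r : ℝ) * traceNorm (A - B)) ∧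
      |((psdSqrt A).trace).re - ((psdSqrt B).trace).re| ≤
        Real.sqrt ((r : ℝ) * traceNorm (A - B)) := by
  simp only [psdSqrt_eq_cfcSqrt]
  have hC : (A - B).IsHermitian := hA.1.sub hB.1
  have hbound : traceNorm (CFC.sqrt A - CFC.sqrt B) ≤ √(r * traceNorm (A - B)) :=
    calc traceNorm (CFC.sqrt A - CFC.sqrt B)
        ≤ (CFC.sqrt (A - B)⁺).trace.re + (CFC.sqrt (A - B)⁻).trace.re :=
          traceNorm_sqrt_sub_sqrt_le hA.nonneg hB.nonneg
      _ = ∑ i, √|hC.eigenvalues i| := by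
          rw [← Complex.add_re, hC.trace_sqrt_posPart_add_trace_sqrt_negPart, Complex.re_sum]
          simp
      _ ≤ √(r * traceNorm (A - B)) := hC.sum_sqrt_abs_eigenvalues_le hrank
  have hD : (CFC.sqrt A - CFC.sqrt B).IsHermitian :=
    (CFC.sqrt_nonneg A).isSelfAdjoint.sub (CFC.sqrt_nonneg B).isSelfAdjoint
  refine ⟨hbound, ?_⟩
  rw [← Complex.sub_re, ← Matrix.trace_sub]
  exact hD.abs_re_trace_le_traceNorm.trans hbound
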